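/- Let Q be a (+k)-path subset of U^{s,t} (with U as above), with first point in P^α and last point in P^β. Then the number of indices γ with α < γ < β such that |Q ∩ P^γ| ≥ 2 is at most ⌊k/2⌋; if instead Q is a (−k)-path, this number is at most ⌊(k−1)/2⌋. -/

import Mathlib

def Generic (S : Finset (ℝ × ℝ)) : Prop :=
  ∀ p ∈ S, ∀ q ∈ S, p ≠ q → p.1 ≠ q.1 ∧ p.2 ≠ q.2

def IncChain (P : Finset (ℝ × ℝ)) : Prop :=
  ∀ p ∈ P, ∀ q ∈ P, p ≠ q → (p.1 < q.1 ∧ p.2 < q.2) ∨ (q.1 < p.1 ∧ q.2 < p.2)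

def DecChain (P : Finset (ℝ × ℝ)) : Prop :=
  ∀ p ∈ P, ∀ q ∈ P, p ≠ q → (p.1 < q.1 ∧ q.2 < p.2) ∨ (q.1 < p.1 ∧ p.2 < q.2)

/-- Sections of a signed k-modal path: x-consecutive, with the even-indexed
sections increasing iff up = true, and alternating monotonicities. -/
def SignedSections (k : ℕ) (up : Bool) (F : Fin (k + 1) → Finset (ℝ × ℝ)) : Prop :=
  (∀ i j : Fin (k + 1), i < j → ∀ p ∈ F i, ∀ q ∈ F j, p.1 < q.1) ∧
  (∀ j : Fin (k + 1), if decide ((j : ℕ) % 2 = 0) = up then IncChain (F j) else DecChain (F j))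

/-- P is a (+k)-path (up = true) or a (−k)-path (up = false). -/
def IsSignedModalPath (k : ℕ) (up : Bool) (P : Finset (ℝ × ℝ)) : Prop :=
  ∃ F : Fin (k + 1) → Finset (ℝ × ℝ),
    (∀ p ∈ P, ∃ i, p ∈ F i) ∧ (∀ i, F i ⊆ P) ∧ SignedSections k up F

def IsModalPath (k : ℕ) (P : Finset (ℝ × ℝ)) : Prop :=
  ∃ up : Bool, IsSignedModalPath k up P

/-- Length profile of the decreasing chains in the construction U^{s,t}:
t, t+1, ..., 2t−1, then 2t (s times), then 2t−1, ..., t+1, t. -/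
def chainLen (s t i : ℕ) : ℕ :=
  if i < t then t + i else if i < t + s then 2 * t else 3 * t + s - 1 - i

/-!
Each chain `P γ` is decreasing, so two points of `Q ∩ P γ` form a decreasing pair of `Q`, and
between their sections lies a decreasing section of `Q` (monotonicities alternate). That
section is neither the first nor the last one, since the first point of `Q` lies strictly
below-left and the last point strictly above-right of `P γ`. Since the chains are pairwise
comparable, distinct `γ` get strictly increasing sections, and a (+k)-path has `⌊k/2⌋`
such inner decreasing sections (the odd ones), a (−k)-path `⌊(k−1)/2⌋` (the even ones).
-/

open Finset

theorem DecChain.mono {S T : Finset (ℝ × ℝ)} (h : DecChain T) (hST : S ⊆ T) : DecChain S :=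
  fun p hp q hq hpq => h p (hST hp) q (hST hq) hpq

theorem DecChain.snd_lt_of_fst_lt {S : Finset (ℝ × ℝ)} (h : DecChain S) {p q : ℝ × ℝ}
    (hp : p ∈ S) (hq : q ∈ S) (hpq : p.1 < q.1) : q.2 < p.2 := by
  rcases h p hp q hq (fun h => hpq.ne (congrArg Prod.fst h)) with h | h
  · exact h.2
  · exact absurd hpq h.1.not_gt

theorem IncChain.snd_lt_of_fst_lt {S : Finset (ℝ × ℝ)} (h : IncChain S) {p q : ℝ × ℝ}
    (hp : p ∈ S) (hq : q ∈ S) (hpq : p.1 < q.1) : p.2 < q.2 := by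
  rcases h p hp q hq (fun h => hpq.ne (congrArg Prod.fst h)) with h | h
  · exact h.2
  · exact absurd hpq h.1.not_gt

theorem DecChain.exists_fst_lt {S : Finset (ℝ × ℝ)} (h : DecChain S) (hS : 1 < S.card) :
    ∃ p ∈ S, ∃ q ∈ S, p.1 < q.1 := by
  obtain ⟨p, hp, q, hq, hpq⟩ := one_lt_card.mp hS
  rcases h p hp q hq hpq with h | h
  · exact ⟨p, hp, q, hq, h.1⟩
  · exact ⟨q, hq, p, hp, h.1⟩

def innerDecSections (k : ℕ) (up : Bool) : Finset (Fin (k + 1)) :=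
  univ.filter fun e => e ≠ 0 ∧ e ≠ Fin.last k ∧ decide ((e : ℕ) % 2 = 0) ≠ up

-- The indices of `innerDecSections k up` are positive and share a parity, so `j ↦ (j - 1) / 2`
-- is injective on them.
theorem card_innerDecSections_le {k B : ℕ} {up : Bool}
    (hB : ∀ j, 0 < j → j < k → decide (j % 2 = 0) ≠ up → (j - 1) / 2 < B) :
    (innerDecSections k up).card ≤ B := by
  have hmem : ∀ e ∈ innerDecSections k up,
      0 < (e : ℕ) ∧ (e : ℕ) < k ∧ decide ((e : ℕ) % 2 = 0) ≠ up := by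
    intro e he
    simp only [innerDecSections, mem_filter, mem_univ, true_and, ne_eq, Fin.ext_iff,
      Fin.val_zero, Fin.val_last] at he
    exact ⟨by omega, by omega, he.2.2⟩
  calc (innerDecSections k up).card ≤ (range B).card := by
        refine card_le_card_of_injOn (fun e => ((e : ℕ) - 1) / 2) (fun e he => ?_) ?_
        · obtain ⟨h0, hk, hpar⟩ := hmem e he
          exact mem_range.mpr (hB e h0 hk hpar)
        · intro e he e' he' hee'
          obtain ⟨h0, -, hpar⟩ := hmem e he
          obtain ⟨h0', -, hpar'⟩ := hmem e' he'
          have : (e : ℕ) % 2 = (e' : ℕ) % 2 := by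
            cases up <;> simp only [ne_eq, decide_eq_true_eq, decide_eq_false_iff_not,
              not_not] at hpar hpar' <;> omega
          exact Fin.ext (by simp only at hee'; omega)
    _ = B := card_range B

namespace SignedSections

variable {k : ℕ} {up : Bool} {F : Fin (k + 1) → Finset (ℝ × ℝ)}

theorem le_of_fst_lt (hF : SignedSections k up F) {i j : Fin (k + 1)} {p q : ℝ × ℝ}
    (hp : p ∈ F i) (hq : q ∈ F j) (hpq : p.1 < q.1) : i ≤ j :=
  le_of_not_gt fun hji => (hF.1 j i hji q hq p hp).not_gt hpq

theorem decChain (hF : SignedSections k up F) {e : Fin (k + 1)}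
    (he : decide ((e : ℕ) % 2 = 0) ≠ up) : DecChain (F e) := by
  simpa only [if_neg he] using hF.2 e

theorem incChain (hF : SignedSections k up F) {e : Fin (k + 1)}
    (he : decide ((e : ℕ) % 2 = 0) = up) : IncChain (F e) := by
  simpa only [if_pos he] using hF.2 e

-- If `b` is increasing then `a < b`, and section `b - 1` has the other monotonicity.
theorem exists_decChain_between (hF : SignedSections k up F) {a b : Fin (k + 1)}
    {p q : ℝ × ℝ} (hp : p ∈ F a) (hq : q ∈ F b) (hpq : p.1 < q.1) (hqp : q.2 < p.2) :
    ∃ e, a ≤ e ∧ e ≤ b ∧ decide ((e : ℕ) % 2 = 0) ≠ up := by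
  by_cases hb : decide ((b : ℕ) % 2 = 0) = up
  · have hab : a < b := by
      refine lt_of_le_of_ne (hF.le_of_fst_lt hp hq hpq) fun hab => ?_
      subst hab
      exact hqp.not_gt ((hF.incChain hb).snd_lt_of_fst_lt hp hq hpq)
    have hab' := Fin.lt_def.mp hab
    refine ⟨⟨b - 1, by omega⟩, Fin.le_def.mpr (show (a : ℕ) ≤ b - 1 by omega),
      Fin.le_def.mpr (show (b : ℕ) - 1 ≤ b by omega), fun h => ?_⟩
    cases up <;> simp only [decide_eq_true_eq, decide_eq_false_iff_not] at h hb <;> omega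
  · exact ⟨b, hF.le_of_fst_lt hp hq hpq, le_rfl, hb⟩

-- A decreasing section cannot contain both `fp` and `p`, nor both `q` and `lp`.
theorem exists_mem_innerDecSections (hF : SignedSections k up F)
    {a b c d : Fin (k + 1)} {fp p q lp : ℝ × ℝ}
    (hfp : fp ∈ F c) (hp : p ∈ F a) (hq : q ∈ F b) (hlp : lp ∈ F d)
    (hfpp : fp.1 < p.1 ∧ fp.2 < p.2) (hpq : p.1 < q.1) (hqp : q.2 < p.2)
    (hqlp : q.1 < lp.1 ∧ q.2 < lp.2) :
    ∃ e ∈ innerDecSections k up, a ≤ e ∧ e ≤ b := by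
  obtain ⟨e, hae, heb, he⟩ := hF.exists_decChain_between hp hq hpq hqp
  have hca := hF.le_of_fst_lt hfp hp hfpp.1
  have hbd := hF.le_of_fst_lt hq hlp hqlp.1
  refine ⟨e, mem_filter.mpr ⟨mem_univ e, fun he0 => ?_, fun hek => ?_, he⟩, hae, heb⟩
  · subst he0
    rw [Fin.le_zero_iff.mp hae] at hp
    rw [Fin.le_zero_iff.mp (hca.trans hae)] at hfp
    exact hfpp.2.not_gt ((hF.decChain he).snd_lt_of_fst_lt hfp hp hfpp.1)
  · subst hek
    rw [Fin.last_le_iff.mp heb] at hq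
    rw [Fin.last_le_iff.mp (heb.trans hbd)] at hlp
    exact hqlp.2.not_gt ((hF.decChain he).snd_lt_of_fst_lt hq hlp hqlp.1)

theorem lt_of_fst_lt_of_snd_lt (hF : SignedSections k up F) {a b e e' : Fin (k + 1)}
    {p q : ℝ × ℝ} (hq : q ∈ F b) (hp : p ∈ F a) (hqp : q.1 < p.1 ∧ q.2 < p.2)
    (he : decide ((e : ℕ) % 2 = 0) ≠ up) (heb : e ≤ b) (hae' : a ≤ e') : e < e' := by
  have hba := hF.le_of_fst_lt hq hp hqp.1
  refine lt_of_le_of_ne (heb.trans (hba.trans hae')) fun hee' => ?_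
  subst hee'
  have hb : b = e := le_antisymm (hba.trans hae') heb
  have ha : a = e := le_antisymm hae' (heb.trans hba)
  subst hb ha
  exact hqp.2.not_gt ((hF.decChain he).snd_lt_of_fst_lt hq hp hqp.1)

end SignedSections

theorem IsSignedModalPath.card_filter_le_card_innerDecSections {n k : ℕ} {up : Bool}
    {P : Fin n → Finset (ℝ × ℝ)} (hdec : ∀ i, DecChain (P i))
    (hcomp : ∀ i j : Fin n, i < j → ∀ p ∈ P i, ∀ q ∈ P j, p.1 < q.1 ∧ p.2 < q.2)
    {Q : Finset (ℝ × ℝ)} (hQ : IsSignedModalPath k up Q) {α β : Fin n} {fp lp : ℝ × ℝ}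
    (hfp : fp ∈ Q) (hfpα : fp ∈ P α) (hlp : lp ∈ Q) (hlpβ : lp ∈ P β) :
    (univ.filter fun γ : Fin n => α < γ ∧ γ < β ∧ 2 ≤ (Q ∩ P γ).card).card ≤
      (innerDecSections k up).card := by
  obtain ⟨F, hcov, -, hF⟩ := hQ
  set G := univ.filter fun γ : Fin n => α < γ ∧ γ < β ∧ 2 ≤ (Q ∩ P γ).card
  have hwit : ∀ γ ∈ G, ∃ e ∈ innerDecSections k up, ∃ (p q : ℝ × ℝ) (a b : Fin (k + 1)),
      p ∈ P γ ∧ q ∈ P γ ∧ p ∈ F a ∧ q ∈ F b ∧ a ≤ e ∧ e ≤ b := by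
    intro γ hγ
    obtain ⟨-, hαγ, hγβ, hcard⟩ := mem_filter.mp hγ
    have hchain : DecChain (Q ∩ P γ) := (hdec γ).mono inter_subset_right
    obtain ⟨p, hp, q, hq, hpq⟩ := hchain.exists_fst_lt hcard
    obtain ⟨hpQ, hpγ⟩ := mem_inter.mp hp
    obtain ⟨hqQ, hqγ⟩ := mem_inter.mp hq
    obtain ⟨a, hpa⟩ := hcov p hpQ
    obtain ⟨b, hqb⟩ := hcov q hqQ
    obtain ⟨c, hfpc⟩ := hcov fp hfp
    obtain ⟨d, hlpd⟩ := hcov lp hlp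
    obtain ⟨e, he, hae, heb⟩ := hF.exists_mem_innerDecSections hfpc hpa hqb hlpd
      (hcomp α γ hαγ fp hfpα p hpγ) hpq (hchain.snd_lt_of_fst_lt hp hq hpq)
      (hcomp γ β hγβ q hqγ lp hlpβ)
    exact ⟨e, he, p, q, a, b, hpγ, hqγ, hpa, hqb, hae, heb⟩
  choose! e he p q a b hp hq hpa hqb hae heb using hwit
  have hmono : StrictMonoOn e G := by
    intro γ hγ γ' hγ' hγγ'
    have hpar := (mem_filter.mp (he γ hγ)).2.2.2
    exact hF.lt_of_fst_lt_of_snd_lt (hqb γ hγ) (hpa γ' hγ')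
      (hcomp γ γ' hγγ' _ (hq γ hγ) _ (hp γ' hγ')) hpar (heb γ hγ) (hae γ' hγ')
  exact card_le_card_of_injOn e he hmono.injOn

theorem stmt15_general (s t k : ℕ)
    (P : Fin (s + 2 * t) → Finset (ℝ × ℝ))
    (hdec : ∀ i, DecChain (P i))
    (hcomp : ∀ i j : Fin (s + 2 * t), i < j →
      ∀ p ∈ P i, ∀ q ∈ P j, p.1 < q.1 ∧ p.2 < q.2)
    (Q : Finset (ℝ × ℝ))
    (α β : Fin (s + 2 * t)) (fp lp : ℝ × ℝ)
    (hfp : fp ∈ Q ∧ fp ∈ P α ∧ ∀ q ∈ Q, fp.1 ≤ q.1)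
    (hlp : lp ∈ Q ∧ lp ∈ P β ∧ ∀ q ∈ Q, q.1 ≤ lp.1) :
    (IsSignedModalPath k true Q →
      (Finset.univ.filter (fun γ : Fin (s + 2 * t) =>
        α < γ ∧ γ < β ∧ 2 ≤ (Q ∩ P γ).card)).card ≤ k / 2) ∧
    (IsSignedModalPath k false Q →
      (Finset.univ.filter (fun γ : Fin (s + 2 * t) =>
        α < γ ∧ γ < β ∧ 2 ≤ (Q ∩ P γ).card)).card ≤ (k - 1) / 2) := by
  have hbound : ∀ up, IsSignedModalPath k up Q →
      (univ.filter fun γ : Fin (s + 2 * t) => α < γ ∧ γ < β ∧ 2 ≤ (Q ∩ P γ).card).card ≤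
        (innerDecSections k up).card := fun _ hQ =>
    hQ.card_filter_le_card_innerDecSections hdec hcomp hfp.1 hfp.2.1 hlp.1 hlp.2.1
  refine ⟨fun hQ => (hbound true hQ).trans (card_innerDecSections_le ?_),
    fun hQ => (hbound false hQ).trans (card_innerDecSections_le ?_)⟩
  · intro j _ hj hpar
    simp only [ne_eq, decide_eq_true_eq] at hpar
    omega
  · intro j hj0 hj hpar
    simp only [ne_eq, decide_eq_false_iff_not, not_not] at hpar
    omega

theorem stmt15 (s t k : ℕ) (hs : 1 ≤ s) (ht : 1 ≤ t) (hk : 1 ≤ k)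
    (P : Fin (s + 2 * t) → Finset (ℝ × ℝ))
    (hdec : ∀ i, DecChain (P i))
    (hcard : ∀ i : Fin (s + 2 * t), (P i).card = chainLen s t (i : ℕ))
    (hcomp : ∀ i j : Fin (s + 2 * t), i < j →
      ∀ p ∈ P i, ∀ q ∈ P j, p.1 < q.1 ∧ p.2 < q.2)
    (Q : Finset (ℝ × ℝ)) (hQ : Q ⊆ Finset.univ.biUnion P)
    (α β : Fin (s + 2 * t)) (fp lp : ℝ × ℝ)
    (hfp : fp ∈ Q ∧ fp ∈ P α ∧ ∀ q ∈ Q, fp.1 ≤ q.1)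
    (hlp : lp ∈ Q ∧ lp ∈ P β ∧ ∀ q ∈ Q, q.1 ≤ lp.1) :
    (IsSignedModalPath k true Q →
      (Finset.univ.filter (fun γ : Fin (s + 2 * t) =>
        α < γ ∧ γ < β ∧ 2 ≤ (Q ∩ P γ).card)).card ≤ k / 2) ∧
    (IsSignedModalPath k false Q →
      (Finset.univ.filter (fun γ : Fin (s + 2 * t) =>
        α < γ ∧ γ < β ∧ 2 ≤ (Q ∩ P γ).card)).card ≤ (k - 1) / 2) :=
  stmt15_general s t k P hdec hcomp Q α β fp lp hfp hlp
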